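/- For all nonnegative integers n, m and positive integers r, the identity w_{n+m}^{(r)}(y) = Σ_{k=0}^{m} S_r(m+r, k+r)·(r)_k·(-1)^{m+k}·(y+1)^k·w_n^{(r+k)}(y) holds as an identity of polynomials in y. -/
import Mathlib


open Finset

/-- Stirling numbers of the second kind. -/
def stirling2 : ℕ → ℕ → ℕ
  | 0, 0 => 1
  | 0, _+1 => 0
  | _+1, 0 => 0
  | n+1, k+1 => stirling2 n k + (k+1) * stirling2 n (k+1)

/-- Unsigned Stirling numbers of the first kind. -/
def stirling1 : ℕ → ℕ → ℕ
  | 0, 0 => 1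
  | 0, _+1 => 0
  | _+1, 0 => 0
  | n+1, k+1 => stirling1 n k + n * stirling1 n (k+1)

/-- `rstirling2 r n k` is the r-Stirling number of the second kind S_r(n+r, k+r). -/
def rstirling2 (r : ℕ) : ℕ → ℕ → ℕ
  | 0, 0 => 1
  | 0, _+1 => 0
  | n+1, 0 => r * rstirling2 r n 0
  | n+1, k+1 => rstirling2 r n k + (k+1+r) * rstirling2 r n (k+1)

/-- `rstirling1 r n k` is the unsigned r-Stirling number of the first kind c_r(n+r, k+r). -/
def rstirling1 (r : ℕ) : ℕ → ℕ → ℕ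
  | 0, 0 => 1
  | 0, _+1 => 0
  | n+1, 0 => (n+r) * rstirling1 r n 0
  | n+1, k+1 => rstirling1 r n k + (n+r) * rstirling1 r n (k+1)

/-- Rising factorial (Pochhammer symbol) (r)_k = r(r+1)⋯(r+k-1). -/
def risingFactorial (r k : ℕ) : ℕ := ∏ i ∈ Finset.range k, (r + i)

/-- Higher order geometric polynomial w_n^{(r)}(y) = Σ_{k=0}^n S(n,k) (r)_k y^k.
For r = 1 this is the geometric (Fubini) polynomial w_n(y). -/
def geomPoly (r n : ℕ) {R : Type*} [CommRing R] (y : R) : R :=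
  ∑ k ∈ Finset.range (n+1), ((stirling2 n k * risingFactorial r k : ℕ) : R) * y ^ k

lemma stirling2_eq_zero : ∀ {n k : ℕ}, n < k → stirling2 n k = 0 := by
  intro n
  induction n with
  | zero => intro k h; cases k with | zero => omega | succ k => rfl
  | succ n ih =>
    intro k h
    cases k with
    | zero => omega
    | succ k => simp [stirling2, ih (by omega : n < k), ih (by omega : n < k+1)]

lemma rstirling2_eq_zero (r : ℕ) : ∀ {m k : ℕ}, m < k → rstirling2 r m k = 0 := by
  intro m
  induction m with
  | zero => intro k h; cases k with | zero => omega | succ k => rfl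
  | succ m ih =>
    intro k h
    cases k with
    | zero => omega
    | succ k => simp [rstirling2, ih (by omega : m < k), ih (by omega : m < k+1)]

lemma rf_succ (r k : ℕ) : risingFactorial r (k+1) = risingFactorial r k * (r+k) :=
  Finset.prod_range_succ _ _

lemma rf_succ' (r k : ℕ) : risingFactorial r (k+1) = r * risingFactorial (r+1) k := by
  unfold risingFactorial
  rw [Finset.prod_range_succ', mul_comm]
  simp only [add_zero]
  congr 1
  exact Finset.prod_congr rfl fun i _ => by omega

lemma geomPoly_succ (r n : ℕ) (y : ℤ) :
    geomPoly r (n+1) y = (r:ℤ)*(y+1)*geomPoly (r+1) n y - (r:ℤ)*geomPoly r n y := by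
  have hrf : ∀ k : ℕ, (r:ℤ) * risingFactorial (r+1) k = risingFactorial r k * (r+k) := by
    intro k
    have := (rf_succ' r k).symm.trans (rf_succ r k)
    exact_mod_cast this
  have step1 : geomPoly r (n+1) y =
      ∑ k ∈ Finset.range (n+1),
        (((stirling2 n k * risingFactorial r (k+1) : ℕ) : ℤ) * y ^ (k+1)
          + ((k * (stirling2 n k * risingFactorial r k) : ℕ) : ℤ) * y ^ k) := by
    unfold geomPoly
    rw [Finset.sum_range_succ']
    rw [Finset.sum_add_distrib]
    have h0 : stirling2 (n+1) 0 = 0 := rfl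
    rw [h0]
    simp only [Nat.zero_mul, Nat.cast_zero, zero_mul, pow_zero, mul_one, add_zero]
    -- LHS: ∑ k, ↑(stirling2 (n+1) (k+1) * rf r (k+1)) * y^(k+1)
    have hrec : ∀ k, stirling2 (n+1) (k+1) = stirling2 n k + (k+1) * stirling2 n (k+1) :=
      fun k => rfl
    -- second sum reindex
    have h2 : ∑ k ∈ Finset.range (n+1), ((k * (stirling2 n k * risingFactorial r k) : ℕ) : ℤ) * y ^ k
        = ∑ k ∈ Finset.range (n+1), (((k+1) * stirling2 n (k+1) * risingFactorial r (k+1) : ℕ) : ℤ) * y ^ (k+1) := by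
      rw [Finset.sum_range_succ' (fun k => ((k * (stirling2 n k * risingFactorial r k) : ℕ) : ℤ) * y ^ k)]
      rw [Finset.sum_range_succ (fun k => (((k+1) * stirling2 n (k+1) * risingFactorial r (k+1) : ℕ) : ℤ) * y ^ (k+1))]
      simp [stirling2_eq_zero (by omega : n < n+1), mul_assoc]
    rw [h2, ← Finset.sum_add_distrib]
    refine Finset.sum_congr rfl fun k _ => ?_
    rw [hrec]
    push_cast
    ring
  rw [step1]
  unfold geomPoly
  rw [Finset.mul_sum, Finset.mul_sum, ← Finset.sum_sub_distrib]
  refine Finset.sum_congr rfl fun k _ => ?_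
  have h1 : ((risingFactorial r (k+1) : ℕ) : ℤ) = (r:ℤ) * risingFactorial (r+1) k := by
    exact_mod_cast rf_succ' r k
  have h3 := hrf k
  push_cast
  rw [h1]
  linear_combination (-(stirling2 n k : ℤ)) * y^k * h3

lemma key (r m : ℕ) (y : ℤ) (W : ℕ → ℤ) :
    ∑ k ∈ Finset.range (m+1),
      (rstirling2 r m k : ℤ) * (risingFactorial r k : ℤ) * (-1)^(m+k) * (y+1)^k *
        (((r:ℤ)+k) * (y+1) * W (k+1) - ((r:ℤ)+k) * W k)
    = ∑ k ∈ Finset.range (m+2),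
      (rstirling2 r (m+1) k : ℤ) * (risingFactorial r k : ℤ) * (-1)^(m+1+k) * (y+1)^k * W k := by
  -- RHS
  rw [Finset.sum_range_succ'
    (fun k => (rstirling2 r (m+1) k : ℤ) * (risingFactorial r k : ℤ) * (-1)^(m+1+k) * (y+1)^k * W k)]
  have hrec : ∀ k, rstirling2 r (m+1) (k+1) = rstirling2 r m k + (k+1+r) * rstirling2 r m (k+1) :=
    fun k => rfl
  have h0 : rstirling2 r (m+1) 0 = r * rstirling2 r m 0 := rfl
  -- LHS split
  simp only [mul_sub]
  rw [Finset.sum_sub_distrib]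
  -- first LHS sum equals the "E1" part; second equals "E2 + D0"
  have hE : ∀ k, (rstirling2 r (m+1) (k+1) : ℤ) * (risingFactorial r (k+1) : ℤ) * (-1)^(m+1+(k+1)) * (y+1)^(k+1) * W (k+1)
      = (rstirling2 r m k : ℤ) * (risingFactorial r (k+1) : ℤ) * (-1)^(m+k) * (y+1)^(k+1) * W (k+1)
        + ((k:ℤ)+1+r) * (rstirling2 r m (k+1) : ℤ) * (risingFactorial r (k+1) : ℤ) * (-1)^(m+k) * (y+1)^(k+1) * W (k+1) := by
    intro k
    rw [hrec]
    have : (-1:ℤ)^(m+1+(k+1)) = (-1)^(m+k) := by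
      rw [show m+1+(k+1) = (m+k)+2 from by omega, pow_add]
      ring
    rw [this]
    push_cast
    ring
  rw [Finset.sum_congr rfl (fun k _ => hE k), Finset.sum_add_distrib]
  -- match term by term
  have hA : ∑ k ∈ Finset.range (m+1),
        (rstirling2 r m k : ℤ) * (risingFactorial r k : ℤ) * (-1)^(m+k) * (y+1)^k * (((r:ℤ)+k) * (y+1) * W (k+1))
      = ∑ k ∈ Finset.range (m+1),
        (rstirling2 r m k : ℤ) * (risingFactorial r (k+1) : ℤ) * (-1)^(m+k) * (y+1)^(k+1) * W (k+1) := by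
    refine Finset.sum_congr rfl fun k _ => ?_
    have : ((risingFactorial r (k+1) : ℕ) : ℤ) = (risingFactorial r k : ℤ) * ((r:ℤ)+k) := by
      exact_mod_cast rf_succ r k
    rw [this]; ring
  have hB : ∑ k ∈ Finset.range (m+1),
        (rstirling2 r m k : ℤ) * (risingFactorial r k : ℤ) * (-1)^(m+k) * (y+1)^k * (((r:ℤ)+k) * W k)
      = -(∑ k ∈ Finset.range (m+1),
          ((k:ℤ)+1+r) * (rstirling2 r m (k+1) : ℤ) * (risingFactorial r (k+1) : ℤ) * (-1)^(m+k) * (y+1)^(k+1) * W (k+1))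
        - (rstirling2 r (m+1) 0 : ℤ) * (risingFactorial r 0 : ℤ) * (-1)^(m+1+0) * (y+1)^0 * W 0 := by
    rw [Finset.sum_range_succ'
      (fun k => (rstirling2 r m k : ℤ) * (risingFactorial r k : ℤ) * (-1)^(m+k) * (y+1)^k * (((r:ℤ)+k) * W k))]
    rw [Finset.sum_range_succ
      (fun k => ((k:ℤ)+1+r) * (rstirling2 r m (k+1) : ℤ) * (risingFactorial r (k+1) : ℤ) * (-1)^(m+k) * (y+1)^(k+1) * W (k+1))]
    rw [rstirling2_eq_zero r (by omega : m < m+1), h0]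
    have hsgn : ∀ k : ℕ, (-1:ℤ)^(m+(k+1)) = -(-1)^(m+k) := by
      intro k; rw [show m+(k+1) = (m+k)+1 from by omega, pow_succ]; ring
    have hterm : ∀ k : ℕ, (rstirling2 r m (k+1) : ℤ) * (risingFactorial r (k+1) : ℤ) * (-1)^(m+(k+1)) * (y+1)^(k+1) * (((r:ℤ)+((k+1:ℕ):ℤ)) * W (k+1))
        = -(((k:ℤ)+1+r) * (rstirling2 r m (k+1) : ℤ) * (risingFactorial r (k+1) : ℤ) * (-1)^(m+k) * (y+1)^(k+1) * W (k+1)) := by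
      intro k; rw [hsgn]; push_cast; ring
    rw [Finset.sum_congr rfl (fun k _ => hterm k)]
    rw [Finset.sum_neg_distrib]
    have hsgn0 : (-1:ℤ)^(m+1+0) = -(-1)^(m+0) := by
      rw [show m+1+0 = (m+0)+1 from by omega, pow_succ]; ring
    rw [hsgn0]
    have : (risingFactorial r 0 : ℤ) = 1 := by norm_num [risingFactorial]
    rw [this]
    push_cast
    ring
  rw [hA, hB]
  ring


theorem stmt_13 (n m r : ℕ) (hr : 1 ≤ r) (y : ℤ) :
    geomPoly r (n + m) y =
      ∑ k ∈ Finset.range (m+1),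
        (rstirling2 r m k : ℤ) * (risingFactorial r k : ℤ) * (-1)^(m+k) * (y+1)^k *
          geomPoly (r+k) n y := by
  induction m generalizing n with
  | zero =>
    simp [rstirling2, risingFactorial]
  | succ m ih =>
    rw [show n + (m+1) = (n+1) + m from by omega, ih (n+1)]
    have hW : ∀ k ∈ Finset.range (m+1),
        (rstirling2 r m k : ℤ) * (risingFactorial r k : ℤ) * (-1)^(m+k) * (y+1)^k *
          geomPoly (r+k) (n+1) y
        = (rstirling2 r m k : ℤ) * (risingFactorial r k : ℤ) * (-1)^(m+k) * (y+1)^k *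
          (((r:ℤ)+k) * (y+1) * geomPoly (r+(k+1)) n y - ((r:ℤ)+k) * geomPoly (r+k) n y) := by
      intro k _
      rw [geomPoly_succ (r+k) n y]
      push_cast
      ring_nf
    rw [Finset.sum_congr rfl hW, key r m y (fun j => geomPoly (r+j) n y)]
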